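/- Let a > 0, x₀ ≥ 0, b ∈ ℕ_{>0}, and let U = {z ∈ ℂ : |z − x₀| < a}. Then for every n ∈ ℕ, ∫_U z^n · (b²/π)|z|^{2b−2} d²z = ∑_{j=0}^{b−1} C(n,j) x₀^{n−j} f_j, where f_j = 2b² ∑_{k=0, k−j even}^{b−1} C(b−1,k) C(k,(k−j)/2) x₀^k ∑_{m=0}^{b−1−k} C(b−1−k, m) x₀^{2(b−1−k−m)} a^{2+j+k+2m}/(2+j+k+2m). -/

import Mathlib

/-!
Write `z = x₀ + r e^{iθ}` in polar coordinates about the centre of the disk. Then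
`zⁿ = ∑ⱼ C(n,j) x₀^{n-j} rʲ e^{ijθ}` and `|z|^{2b-2} = (x₀² + r² + 2x₀ r cos θ)^{b-1}`, so the
integrand is a finite sum of products of a polynomial in `r` and `e^{ijθ} cosᵏ θ`. Expanding
`cosᵏ θ = 2⁻ᵏ (e^{iθ} + e^{-iθ})ᵏ`, only the constant Fourier mode survives integration over a
period, which gives `2π C(k,(k-j)/2) / 2ᵏ` when `k - j` is even and nonnegative and `0` otherwise;
the radial integrals are integrals of polynomials once `(x₀² + r²)^{b-1-k}` is expanded.
-/

open MeasureTheory Finset Complex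
open scoped Real

theorem integral_exp_int_mul_mul_I (p : ℤ) :
    ∫ θ in -π..π, exp (p * θ * I) = if p = 0 then 2 * (π : ℂ) else 0 := by
  split_ifs with hp
  · simp [hp, two_mul]
  have hpI : (p : ℂ) * I ≠ 0 := by simp [hp]
  have hperiod : exp (p * I * π) = exp (p * I * ↑(-π)) := by
    rw [exp_eq_exp_iff_exists_int]
    exact ⟨p, by push_cast; ring⟩
  simp_rw [mul_right_comm _ _ I]
  rw [integral_exp_mul_complex hpI, hperiod, sub_self, zero_div]

theorem exp_nat_mul_mul_cos_pow_eq_sum (j k : ℕ) (θ : ℝ) :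
    exp (j * θ * I) * (Real.cos θ : ℂ) ^ k =
      ∑ l ∈ range (k + 1), (k.choose l / 2 ^ k : ℂ) * exp (((j + 2 * l - k : ℤ) : ℂ) * θ * I) := by
  have hcos : (Real.cos θ : ℂ) = (exp (θ * I) + exp (-(θ * I))) / 2 := by
    rw [ofReal_cos, Complex.cos]
    ring_nf
  rw [hcos, div_pow, add_pow, sum_div, mul_sum]
  refine sum_congr rfl fun l hl => ?_
  have hlk : l ≤ k := Nat.lt_succ_iff.mp (mem_range.mp hl)
  have hexp : exp (((j + 2 * l - k : ℤ) : ℂ) * θ * I) =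
      exp (j * θ * I) * (exp (θ * I) ^ l * exp (-(θ * I)) ^ (k - l)) := by
    rw [← exp_nat_mul, ← exp_nat_mul, ← exp_add, ← exp_add]
    push_cast [hlk]
    ring_nf
  rw [hexp]
  ring

theorem integral_exp_nat_mul_mul_cos_pow (j k : ℕ) :
    ∫ θ in -π..π, exp (j * θ * I) * (Real.cos θ : ℂ) ^ k =
      if j ≤ k ∧ Even (k - j) then 2 * (π : ℂ) * k.choose ((k - j) / 2) / 2 ^ k else 0 := by
  have hfreq : ∀ l : ℕ, (j + 2 * l - k : ℤ) = 0 ↔ l = (k - j) / 2 ∧ (j ≤ k ∧ Even (k - j)) := by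
    intro l
    rw [Nat.even_iff]
    omega
  simp_rw [exp_nat_mul_mul_cos_pow_eq_sum]
  rw [intervalIntegral.integral_finsetSum fun l _ =>
    (by fun_prop : Continuous _).intervalIntegrable _ _]
  simp_rw [intervalIntegral.integral_const_mul, integral_exp_int_mul_mul_I, hfreq, mul_ite,
    mul_zero, ite_and]
  rw [sum_ite_eq', if_pos (mem_range.mpr (by omega))]
  split_ifs <;> ring

theorem integral_pow_mul_sq_add_sq_pow (a x : ℝ) (e q : ℕ) :
    ∫ r in (0 : ℝ)..a, r ^ e * (x ^ 2 + r ^ 2) ^ q =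
      ∑ m ∈ range (q + 1), q.choose m * x ^ (2 * (q - m)) * a ^ (e + 2 * m + 1) /
        ((e + 2 * m + 1 : ℕ) : ℝ) := by
  simp_rw [add_comm (x ^ 2), add_pow, mul_sum]
  rw [intervalIntegral.integral_finsetSum fun m _ =>
    (by fun_prop : Continuous _).intervalIntegrable _ _]
  refine sum_congr rfl fun m _ => ?_
  have hterm : ∀ r : ℝ, r ^ e * ((r ^ 2) ^ m * (x ^ 2) ^ (q - m) * q.choose m) =
      q.choose m * x ^ (2 * (q - m)) * r ^ (e + 2 * m) := fun r => by ring
  simp_rw [hterm, intervalIntegral.integral_const_mul, integral_pow]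
  push_cast
  ring

theorem norm_ofReal_add_mul_exp_sq (x r θ : ℝ) :
    ‖(x : ℂ) + r * exp (θ * I)‖ ^ 2 = x ^ 2 + r ^ 2 + 2 * x * r * Real.cos θ := by
  rw [Complex.sq_norm, normSq_apply]
  simp only [add_re, add_im, mul_re, mul_im, ofReal_re, ofReal_im, exp_ofReal_mul_I_re,
    exp_ofReal_mul_I_im, zero_mul, sub_zero, add_zero, zero_add]
  linear_combination r ^ 2 * Real.sin_sq_add_cos_sq θ

theorem ofReal_add_mul_exp_pow_mul_norm_pow (x r θ : ℝ) (n q : ℕ) :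
    ((x : ℂ) + r * exp (θ * I)) ^ n * ((‖(x : ℂ) + r * exp (θ * I)‖ ^ (2 * q) : ℝ) : ℂ) =
      ∑ j ∈ range (n + 1), ∑ k ∈ range (q + 1),
        (n.choose j * x ^ (n - j) * q.choose k * (2 * x) ^ k : ℂ) *
          ((r ^ (j + k) * (x ^ 2 + r ^ 2) ^ (q - k) : ℝ) : ℂ) *
          (exp (j * θ * I) * (Real.cos θ : ℂ) ^ k) := by
  have hpow : ((x : ℂ) + r * exp (θ * I)) ^ n =
      ∑ j ∈ range (n + 1), (n.choose j * x ^ (n - j) * r ^ j : ℂ) * exp (j * θ * I) := by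
    rw [add_comm, add_pow]
    refine sum_congr rfl fun j _ => ?_
    rw [mul_pow, ← exp_nat_mul]
    ring_nf
  have hnorm : ((‖(x : ℂ) + r * exp (θ * I)‖ ^ (2 * q) : ℝ) : ℂ) =
      ∑ k ∈ range (q + 1), (q.choose k * (2 * x * r) ^ k * (x ^ 2 + r ^ 2) ^ (q - k) : ℂ) *
        (Real.cos θ : ℂ) ^ k := by
    rw [pow_mul, norm_ofReal_add_mul_exp_sq]
    push_cast
    rw [add_comm, add_pow]
    refine sum_congr rfl fun k _ => ?_
    ring
  rw [hpow, hnorm, sum_mul_sum]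
  refine sum_congr rfl fun j _ => sum_congr rfl fun k _ => ?_
  push_cast
  ring

theorem real_smul_pow_mul_mul_norm_pow_eq_sum (x r θ : ℝ) (c : ℂ) (n : ℕ) {b : ℕ} (hb : 0 < b) :
    r • (((x : ℂ) + r * exp (θ * I)) ^ n * c *
      ((‖(x : ℂ) + r * exp (θ * I)‖ ^ (2 * b - 2) : ℝ) : ℂ)) =
      ∑ p ∈ range (n + 1) ×ˢ range b,
        (n.choose p.1 * x ^ (n - p.1) * (c * (b - 1).choose p.2 * (2 * x) ^ p.2)) *
          ((r ^ (p.1 + p.2 + 1) * (x ^ 2 + r ^ 2) ^ (b - 1 - p.2) : ℝ) : ℂ) *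
          (exp (p.1 * θ * I) * (Real.cos θ : ℂ) ^ p.2) := by
  rw [real_smul, mul_right_comm, show 2 * b - 2 = 2 * (b - 1) by omega,
    ofReal_add_mul_exp_pow_mul_norm_pow, Nat.sub_add_cancel hb, sum_product, sum_mul, mul_sum]
  refine sum_congr rfl fun j _ => ?_
  rw [sum_mul, mul_sum]
  refine sum_congr rfl fun k _ => ?_
  push_cast
  ring

theorem setIntegral_ball_eq_integral_polar {E : Type*} [NormedAddCommGroup E] [NormedSpace ℝ E]
    (c : ℂ) {a : ℝ} (ha : 0 ≤ a) {F : ℂ → E} (hF : Continuous F) :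
    ∫ z in Metric.ball c a, F z = ∫ r in (0 : ℝ)..a, ∫ θ in -π..π, r • F (c + r * exp (θ * I)) := by
  set G : ℝ × ℝ → E := fun p => p.1 • F (c + p.1 * exp (p.2 * I))
  have htranslate : ∫ z in Metric.ball c a, F z = ∫ w in Metric.ball 0 a, F (c + w) := by
    rw [← (measurePreserving_add_left volume c).setIntegral_preimage_emb
      (measurableEmbedding_addLeft c)]
    congr 2
    ext w
    simp
  have hpolar : ∫ w in Metric.ball 0 a, F (c + w) = ∫ p in Set.Ioo 0 a ×ˢ Set.Ioo (-π) π, G p := by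
    rw [← integral_indicator measurableSet_ball, ← Complex.integral_comp_polarCoord_symm,
      polarCoord_target, setIntegral_eq_of_subset_of_forall_sdiff_eq_zero
        (measurableSet_Ioi.prod measurableSet_Ioo) (Set.prod_mono Set.Ioo_subset_Ioi_self le_rfl)]
    · refine setIntegral_congr_fun (measurableSet_Ioo.prod measurableSet_Ioo) fun p hp => ?_
      have hmem : Complex.polarCoord.symm p ∈ Metric.ball 0 a := by
        simpa [abs_of_pos hp.1.1] using hp.1.2
      rw [Set.indicator_of_mem hmem, Complex.polarCoord_symm_apply, ofReal_cos, ofReal_sin,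
        ← exp_mul_I]
    · rintro p ⟨⟨hp₁, hp₂⟩, hp⟩
      have hpa : a ≤ p.1 := not_lt.mp fun h => hp ⟨⟨hp₁, h⟩, hp₂⟩
      have hnmem : Complex.polarCoord.symm p ∉ Metric.ball 0 a := by
        simpa [abs_of_pos (Set.mem_Ioi.mp hp₁)] using hpa
      rw [Set.indicator_of_notMem hnmem, smul_zero]
  have hG : IntegrableOn G (Set.Icc 0 a ×ˢ Set.Icc (-π) π) :=
    (by fun_prop : Continuous G).continuousOn.integrableOn_compact
      (isCompact_Icc.prod isCompact_Icc)
  rw [htranslate, hpolar, Measure.volume_eq_prod, setIntegral_prod _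
    (hG.mono_set (Set.prod_mono Set.Ioo_subset_Icc_self Set.Ioo_subset_Icc_self)),
    intervalIntegral.integral_of_le ha, integral_Ioc_eq_integral_Ioo]
  refine setIntegral_congr_fun measurableSet_Ioo fun r _ => ?_
  rw [intervalIntegral.integral_of_le (by linarith [Real.pi_pos]), integral_Ioc_eq_integral_Ioo]

theorem integral_integral_sum_mul_mul {𝕜 ι : Type*} [RCLike 𝕜] (s : Finset ι) (c : ι → 𝕜)
    {g h : ι → ℝ → 𝕜} {a b a' b' : ℝ} (hg : ∀ i ∈ s, IntervalIntegrable (g i) volume a b)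
    (hh : ∀ i ∈ s, IntervalIntegrable (h i) volume a' b') :
    ∫ r in a..b, ∫ θ in a'..b', ∑ i ∈ s, c i * g i r * h i θ =
      ∑ i ∈ s, c i * (∫ r in a..b, g i r) * ∫ θ in a'..b', h i θ := by
  have hinner : ∀ r, ∫ θ in a'..b', ∑ i ∈ s, c i * g i r * h i θ =
      ∑ i ∈ s, (c i * ∫ θ in a'..b', h i θ) * g i r := fun r => by
    rw [intervalIntegral.integral_finsetSum fun i hi => (hh i hi).const_mul _]
    refine sum_congr rfl fun i _ => ?_
    rw [intervalIntegral.integral_const_mul]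
    ring
  simp_rw [hinner]
  rw [intervalIntegral.integral_finsetSum fun i hi => (hg i hi).const_mul _]
  refine sum_congr rfl fun i _ => ?_
  rw [intervalIntegral.integral_const_mul]
  ring

noncomputable def diskMomentCoeff (a x₀ : ℝ) (b j : ℕ) : ℝ :=
  2 * (b : ℝ) ^ 2 * ∑ k ∈ range b,
    (if j ≤ k ∧ Even (k - j) then
      ((b - 1).choose k : ℝ) * (k.choose ((k - j) / 2) : ℝ) * x₀ ^ k *
        ∑ m ∈ range (b - k), ((b - 1 - k).choose m : ℝ) *
          x₀ ^ (2 * (b - 1 - k - m)) * a ^ (2 + j + k + 2 * m) / ((2 + j + k + 2 * m : ℕ) : ℝ)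
    else 0)

theorem diskMomentCoeff_of_le {b j : ℕ} (a x₀ : ℝ) (h : b ≤ j) : diskMomentCoeff a x₀ b j = 0 := by
  rw [diskMomentCoeff, sum_eq_zero fun k hk => if_neg fun hjk => ?_, mul_zero]
  exact absurd (hjk.1.trans_lt (mem_range.mp hk)) h.not_gt

theorem diskMomentCoeff_eq_sum_integral_mul_integral (a x₀ : ℝ) (b j : ℕ) :
    (diskMomentCoeff a x₀ b j : ℂ) = ∑ k ∈ range b,
      ((b : ℂ) ^ 2 / π * (b - 1).choose k * (2 * x₀) ^ k) *
        ((∫ r in (0 : ℝ)..a, r ^ (j + k + 1) * (x₀ ^ 2 + r ^ 2) ^ (b - 1 - k) : ℝ) : ℂ) *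
        ∫ θ in -π..π, exp (j * θ * I) * (Real.cos θ : ℂ) ^ k := by
  rw [diskMomentCoeff, ofReal_mul, ofReal_sum, mul_sum]
  refine sum_congr rfl fun k hk => ?_
  have hradial : ∫ r in (0 : ℝ)..a, r ^ (j + k + 1) * (x₀ ^ 2 + r ^ 2) ^ (b - 1 - k) =
      ∑ m ∈ range (b - k), ((b - 1 - k).choose m : ℝ) *
        x₀ ^ (2 * (b - 1 - k - m)) * a ^ (2 + j + k + 2 * m) / ((2 + j + k + 2 * m : ℕ) : ℝ) := by
    have hkb := mem_range.mp hk
    rw [integral_pow_mul_sq_add_sq_pow, show b - 1 - k + 1 = b - k by omega]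
    refine sum_congr rfl fun m _ => ?_
    rw [show j + k + 1 + 2 * m + 1 = 2 + j + k + 2 * m by ring]
  rw [hradial, integral_exp_nat_mul_mul_cos_pow]
  generalize (∑ m ∈ range (b - k), _ : ℝ) = S
  split_ifs
  · push_cast
    field_simp
    ring
  · simp

theorem moments_of_mu_on_disk_general (a x₀ : ℝ) (ha : 0 < a)
    (b : ℕ) (hb : 0 < b) (n : ℕ) :
    let f : ℕ → ℝ := fun j =>
      2 * (b : ℝ) ^ 2 * ∑ k ∈ Finset.range b,
        (if j ≤ k ∧ Even (k - j) then
          ((b - 1).choose k : ℝ) * (k.choose ((k - j) / 2) : ℝ) * x₀ ^ k *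
            ∑ m ∈ Finset.range (b - k), ((b - 1 - k).choose m : ℝ) *
              x₀ ^ (2 * (b - 1 - k - m)) * a ^ (2 + j + k + 2 * m)
                / ((2 + j + k + 2 * m : ℕ) : ℝ)
        else 0)
    (∫ z in {z : ℂ | ‖z - (x₀ : ℂ)‖ < a},
        z ^ n * ((b : ℂ) ^ 2 / (Real.pi : ℂ)) * ((‖z‖ ^ (2 * b - 2) : ℝ) : ℂ))
      = ∑ j ∈ Finset.range b, (n.choose j : ℂ) * (x₀ : ℂ) ^ (n - j) * ((f j : ℝ) : ℂ) := by
  intro f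
  change _ = ∑ j ∈ range b, (n.choose j : ℂ) * (x₀ : ℂ) ^ (n - j) * (diskMomentCoeff a x₀ b j : ℂ)
  have hball : {z : ℂ | ‖z - x₀‖ < a} = Metric.ball (x₀ : ℂ) a := by
    ext
    simp [dist_eq_norm]
  rw [hball, setIntegral_ball_eq_integral_polar _ ha.le (by fun_prop)]
  simp_rw [real_smul_pow_mul_mul_norm_pow_eq_sum _ _ _ _ n hb]
  rw [integral_integral_sum_mul_mul _ _
    (fun _ _ => (by fun_prop : Continuous _).intervalIntegrable _ _)
    (fun _ _ => (by fun_prop : Continuous _).intervalIntegrable _ _), sum_product]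
  simp_rw [intervalIntegral.integral_ofReal]
  have hvanish : ∀ j ≥ min b (n + 1),
      (n.choose j : ℂ) * (x₀ : ℂ) ^ (n - j) * (diskMomentCoeff a x₀ b j : ℂ) = 0 := by
    intro j hj
    rcases min_le_iff.mp hj with hbj | hnj
    · rw [diskMomentCoeff_of_le a x₀ hbj, ofReal_zero, mul_zero]
    · rw [Nat.choose_eq_zero_of_lt hnj, Nat.cast_zero, zero_mul, zero_mul]
  calc
    _ = ∑ j ∈ range (n + 1), (n.choose j : ℂ) * (x₀ : ℂ) ^ (n - j) *
        (diskMomentCoeff a x₀ b j : ℂ) := by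
      refine sum_congr rfl fun j _ => ?_
      rw [diskMomentCoeff_eq_sum_integral_mul_integral, mul_sum]
      refine sum_congr rfl fun k _ => ?_
      ring
    _ = _ := (eventually_constant_sum hvanish (min_le_right _ _)).trans
      (eventually_constant_sum hvanish (min_le_left _ _)).symm

/-- Let `a > 0`, `x₀ ≥ 0`, `b ∈ ℕ_{>0}`, and `U = {z : |z − x₀| < a}`. Then for every
`n ∈ ℕ`, `∫_U zⁿ (b²/π)|z|^{2b−2} d²z = ∑_{j=0}^{b−1} C(n,j) x₀^{n−j} f_j`, where
`f_j = 2b² ∑_{k : k−j even} C(b−1,k) C(k,(k−j)/2) x₀^k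
  ∑_{m=0}^{b−1−k} C(b−1−k,m) x₀^{2(b−1−k−m)} a^{2+j+k+2m}/(2+j+k+2m)`
(the binomial `C(k,(k−j)/2)` vanishes when `k < j`). -/
theorem moments_of_mu_on_disk (a x₀ : ℝ) (ha : 0 < a) (hx₀ : 0 ≤ x₀)
    (b : ℕ) (hb : 0 < b) (n : ℕ) :
    let f : ℕ → ℝ := fun j =>
      2 * (b : ℝ) ^ 2 * ∑ k ∈ Finset.range b,
        (if j ≤ k ∧ Even (k - j) then
          ((b - 1).choose k : ℝ) * (k.choose ((k - j) / 2) : ℝ) * x₀ ^ k *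
            ∑ m ∈ Finset.range (b - k), ((b - 1 - k).choose m : ℝ) *
              x₀ ^ (2 * (b - 1 - k - m)) * a ^ (2 + j + k + 2 * m)
                / ((2 + j + k + 2 * m : ℕ) : ℝ)
        else 0)
    (∫ z in {z : ℂ | ‖z - (x₀ : ℂ)‖ < a},
        z ^ n * ((b : ℂ) ^ 2 / (Real.pi : ℂ)) * ((‖z‖ ^ (2 * b - 2) : ℝ) : ℂ))
      = ∑ j ∈ Finset.range b, (n.choose j : ℂ) * (x₀ : ℂ) ^ (n - j) * ((f j : ℝ) : ℂ) :=
  moments_of_mu_on_disk_general a x₀ ha b hb n
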